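/- Let A be a Hilbert algebra and φ, ψ closure endomorphisms of A. If K_φ = K_ψ, where K_φ = {x ∈ A : φ(x) = 1} and K_ψ = {x ∈ A : ψ(x) = 1}, then φ = ψ. -/
import Mathlib


/-- A Hilbert algebra: a set with implication `imp` and constant `one`. -/
class HilbertAlgebra (A : Type*) where
  imp : A → A → A
  one : A
  imp_one : ∀ x y : A, imp x (imp y x) = one
  imp_distrib : ∀ x y z : A,
    imp (imp x (imp y z)) (imp (imp x y) (imp x z)) = one
  imp_antisymm : ∀ x y : A, imp x y = one → imp y x = one → x = y

namespace HilbertAlgebra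

variable {A : Type*} [HilbertAlgebra A]

/-- The natural order of a Hilbert algebra: `x ≤ y` iff `x → y = 1`. -/
def le (x y : A) : Prop := imp x y = one

/-- A closure endomorphism: an endomorphism that is also a closure operator. -/
def IsClosureEndo (φ : A → A) : Prop :=
  (∀ x y : A, φ (imp x y) = imp (φ x) (φ y)) ∧
  (∀ x : A, le x (φ x)) ∧
  (∀ x : A, φ (φ x) = φ x) ∧
  (∀ x y : A, le x y → le (φ x) (φ y))

lemma self_imp (x : A) : imp x x = one := by
  -- (x→x) → 1 = 1
  have hA : imp (imp x x) one = one := by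
    have e1 : imp x (imp x x) = one := imp_one x x
    have e := imp_one (imp x x) x
    rw [e1] at e
    exact e
  -- 1 → (1 → (x→x)) = 1
  have hB : imp one (imp one (imp x x)) = one := by
    have e := imp_distrib x (imp x x) x
    rw [imp_one x (imp x x), imp_one x x] at e
    exact e
  -- c := 1 → (x→x); c → 1 = 1
  have hC : imp (imp one (imp x x)) one = one := by
    have e2 : imp (imp x x) (imp one (imp x x)) = one := imp_one (imp x x) one
    have e3 := imp_one (imp one (imp x x)) (imp x x)
    rw [e2] at e3
    exact e3
  have hc : imp one (imp x x) = one := imp_antisymm _ _ hC hB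
  exact imp_antisymm _ _ hA hc

lemma imp_top (x : A) : imp x one = one := by
  have e := imp_one x x
  rw [self_imp] at e
  exact e

lemma mp' {b : A} (h : imp one b = one) : b = one :=
  imp_antisymm b one (imp_top b) h

lemma one_imp (x : A) : imp one x = x := by
  have e := imp_distrib (imp one x) one x
  rw [self_imp (imp one x), imp_top (imp one x)] at e
  have e1 : imp (imp one x) x = one := mp' (mp' e)
  exact imp_antisymm _ _ e1 (imp_one x one)

lemma le_trans' {a b c : A} (h1 : le a b) (h2 : le b c) : le a c := by
  unfold le at *
  have e := imp_distrib a b c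
  rw [h2, imp_top a] at e
  have e' := mp' e
  rw [h1] at e'
  exact mp' e'

lemma le_imp_imp (z x : A) : le z (imp (imp z x) x) := by
  have e := imp_distrib (imp z x) z x
  rw [self_imp (imp z x)] at e
  have e1 : le (imp (imp z x) z) (imp (imp z x) x) := mp' e
  exact le_trans' (imp_one z (imp z x)) e1

lemma aux_le (φ ψ : A → A) (hφ : IsClosureEndo φ) (hψ : IsClosureEndo ψ)
    (h : ∀ k : A, φ k = one → ψ k = one) (x : A) : le (φ x) (ψ x) := by
  obtain ⟨fhom, fext, fidem, _⟩ := hφ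
  obtain ⟨ghom, gext, _, _⟩ := hψ
  set k := imp (φ x) x with hk
  have hk1 : φ k = one := by
    have e := fhom (φ x) x
    rw [fidem x, self_imp] at e
    exact e
  -- φ x = k → x
  have hfx : φ x = imp k x := by
    have upper : le (φ x) (imp k x) := le_imp_imp (φ x) x
    have e := fhom k x
    rw [hk1, one_imp] at e
    have lower : le (imp k x) (φ x) := by
      have := fext (imp k x)
      rw [e] at this
      exact this
    exact imp_antisymm _ _ upper lower
  have hk2 : ψ k = one := h k hk1
  have hpsi : ψ (φ x) = ψ x := by
    rw [hfx, ghom k x, hk2, one_imp]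
  have := gext (φ x)
  rw [hpsi] at this
  exact this

/-- A closure endomorphism is determined by its kernel. -/
theorem closureEndo_eq_of_kernel_eq (φ ψ : A → A)
    (hφ : IsClosureEndo φ) (hψ : IsClosureEndo ψ)
    (h : {x : A | φ x = one} = {x : A | ψ x = one}) :
    φ = ψ := by
  have h' : ∀ k : A, φ k = one ↔ ψ k = one := fun k => Set.ext_iff.mp h k
  funext x
  exact imp_antisymm _ _
    (aux_le φ ψ hφ hψ (fun k hk => (h' k).mp hk) x)
    (aux_le ψ φ hψ hφ (fun k hk => (h' k).mpr hk) x)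

end HilbertAlgebra
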